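/- For every λhs type τ, the reducible set Red(τ) is a reducibility candidate: Red(τ) ∈ CR. -/

import Mathlib

/- The simplified calculus λhs, in locally nameless style (two separate
   namespaces: simple variables and audited variables). -/

namespace LHS

/-- Trail-constructor labels. -/
inductive Lab : Type
| rfl | trn | bet | betb | ti | lam | app | lett | tnil | tcons | dflt
deriving DecidableEq

/-- λhs types: atomic P, functions, audited unit □τ. -/
inductive Ty : Type
| base : ℕ → Ty
| arr : Ty → Ty → Ty
| box : Ty → Ty
deriving DecidableEq

mutual
/-- λhs terms (locally nameless: bound variables are de Bruijn indices,
    free variables are names; simple and audited variables are separate). -/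
inductive Tm : Type
| bvar : ℕ → Tm          -- bound simple variable
| fvar : ℕ → Tm          -- free simple variable a
| bavar : ℕ → Tm         -- bound audited variable
| favar : ℕ → Tm         -- free audited variable u
| lam : Ty → Tm → Tm     -- λa^τ.s (binds a simple variable)
| app : Tm → Tm → Tm
| bang : Tm → Tm         -- !s
| lett : Ty → Tm → Tm → Tm  -- let(u^τ := s, t) (binds an audited variable in t)
| ti : Br → Tm           -- trail inspection with finite branch map
/-- Finite inspection-branch maps, as association lists. -/
inductive Br : Type
| nil : Br
| cons : Lab → Tm → Br → Br
end

/-- Domain of a branch map. -/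
def Br.dom : Br → List Lab
| .nil => []
| .cons ψ _ θ => ψ :: Br.dom θ

/-- Lookup in a branch map. -/
def Br.lookup : Br → Lab → Option Tm
| .nil, _ => none
| .cons ψ t θ, ψ' => if ψ = ψ' then some t else Br.lookup θ ψ'

/-- Branch selection: θ(ψ) if ψ ∈ dom(θ), otherwise the default branch θ(d). -/
def Br.sel (θ : Br) (ψ : Lab) : Tm :=
  match θ.lookup ψ with
  | some t => t
  | none => (θ.lookup Lab.dflt).getD (Tm.bvar 0)

mutual
/-- Opening: instantiate bound simple variable k with r. Like simple substitution,
    it does not descend under bangs. -/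
def openS (k : ℕ) (r : Tm) : Tm → Tm
| .bvar i => if i = k then r else .bvar i
| .fvar a => .fvar a
| .bavar i => .bavar i
| .favar u => .favar u
| .lam τ s => .lam τ (openS (k+1) r s)
| .app s t => .app (openS k r s) (openS k r t)
| .bang s => .bang s
| .lett τ s t => .lett τ (openS k r s) (openS k r t)
| .ti θ => .ti (openSBr k r θ)
def openSBr (k : ℕ) (r : Tm) : Br → Br
| .nil => .nil
| .cons ψ t θ => .cons ψ (openS k r t) (openSBr k r θ)
end

mutual
/-- Opening: instantiate bound audited variable k with r. -/
def openA (k : ℕ) (r : Tm) : Tm → Tm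
| .bvar i => .bvar i
| .fvar a => .fvar a
| .bavar i => if i = k then r else .bavar i
| .favar u => .favar u
| .lam τ s => .lam τ (openA k r s)
| .app s t => .app (openA k r s) (openA k r t)
| .bang s => .bang (openA k r s)
| .lett τ s t => .lett τ (openA k r s) (openA (k+1) r t)
| .ti θ => .ti (openABr k r θ)
def openABr (k : ℕ) (r : Tm) : Br → Br
| .nil => .nil
| .cons ψ t θ => .cons ψ (openA k r t) (openABr k r θ)
end

mutual
/-- Closing: abstract the free audited variable u as bound index k. -/
def closeA (k : ℕ) (u : ℕ) : Tm → Tm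
| .bvar i => .bvar i
| .fvar a => .fvar a
| .bavar i => .bavar i
| .favar v => if v = u then .bavar k else .favar v
| .lam τ s => .lam τ (closeA k u s)
| .app s t => .app (closeA k u s) (closeA k u t)
| .bang s => .bang (closeA k u s)
| .lett τ s t => .lett τ (closeA k u s) (closeA (k+1) u t)
| .ti θ => .ti (closeABr k u θ)
def closeABr (k : ℕ) (u : ℕ) : Br → Br
| .nil => .nil
| .cons ψ t θ => .cons ψ (closeA k u t) (closeABr k u θ)
end

mutual
/-- Simple variable substitution s[r/a]: capture-avoiding (locally nameless);
    it does not descend under bangs. -/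
def substS (a : ℕ) (r : Tm) : Tm → Tm
| .bvar i => .bvar i
| .fvar b => if b = a then r else .fvar b
| .bavar i => .bavar i
| .favar u => .favar u
| .lam τ s => .lam τ (substS a r s)
| .app s t => .app (substS a r s) (substS a r t)
| .bang s => .bang s
| .lett τ s t => .lett τ (substS a r s) (substS a r t)
| .ti θ => .ti (substSBr a r θ)
def substSBr (a : ℕ) (r : Tm) : Br → Br
| .nil => .nil
| .cons ψ t θ => .cons ψ (substS a r t) (substSBr a r θ)
end

mutual
/-- Audited variable substitution s[r/u]: capture-avoiding (locally nameless);
    it descends under bangs. -/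
def substA (u : ℕ) (r : Tm) : Tm → Tm
| .bvar i => .bvar i
| .fvar a => .fvar a
| .bavar i => .bavar i
| .favar v => if v = u then r else .favar v
| .lam τ s => .lam τ (substA u r s)
| .app s t => .app (substA u r s) (substA u r t)
| .bang s => .bang (substA u r s)
| .lett τ s t => .lett τ (substA u r s) (substA u r t)
| .ti θ => .ti (substABr u r θ)
def substABr (u : ℕ) (r : Tm) : Br → Br
| .nil => .nil
| .cons ψ t θ => .cons ψ (substA u r t) (substABr u r θ)
end

mutual
/-- Free simple variables. -/
def fvS : Tm → List ℕ
| .bvar _ => []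
| .fvar a => [a]
| .bavar _ => []
| .favar _ => []
| .lam _ s => fvS s
| .app s t => fvS s ++ fvS t
| .bang s => fvS s
| .lett _ s t => fvS s ++ fvS t
| .ti θ => fvSBr θ
def fvSBr : Br → List ℕ
| .nil => []
| .cons _ t θ => fvS t ++ fvSBr θ
end

mutual
/-- Free audited variables. -/
def fvA : Tm → List ℕ
| .bvar _ => []
| .fvar _ => []
| .bavar _ => []
| .favar u => [u]
| .lam _ s => fvA s
| .app s t => fvA s ++ fvA t
| .bang s => fvA s
| .lett _ s t => fvA s ++ fvA t
| .ti θ => fvABr θ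
def fvABr : Br → List ℕ
| .nil => []
| .cons _ t θ => fvA t ++ fvABr θ
end

mutual
/-- λhs trails (obtained from λhc trails by replacing codes with λhs terms). -/
inductive Tr : Type
| rfl : Tm → Tr
| trn : Tr → Tr → Tr
| bet : Ty → Tm → Tm → Tr          -- β(a^τ.s, t) (s binds a simple variable)
| betb : Tm → Ty → Tm → Tr         -- β□(s, u^τ.t) (t binds an audited variable)
| ti : Tr → Br → Tr
| lam : Ty → Tr → Tr
| app : Tr → Tr → Tr
| lett : Tr → Ty → Tr → Tr
| trpl : TrBr → Tr
inductive TrBr : Type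
| nil : TrBr
| cons : Lab → Tr → TrBr → TrBr
end

mutual
/-- The fold qθ of inspection branches θ over a trail q. -/
def fold (θ : Br) : Tr → Tm
| .rfl _ => θ.sel .rfl
| .trn q q' => .app (.app (θ.sel .trn) (fold θ q)) (fold θ q')
| .bet _ _ _ => θ.sel .bet
| .betb _ _ _ => θ.sel .betb
| .ti _ _ => θ.sel .ti
| .lam _ q => .app (θ.sel .lam) (fold θ q)
| .app q q' => .app (.app (θ.sel .app) (fold θ q)) (fold θ q')
| .lett q _ q' => .app (.app (θ.sel .lett) (fold θ q)) (fold θ q')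
| .trpl ζ => foldBr θ ζ
def foldBr (θ : Br) : TrBr → Tm
| .nil => θ.sel .tnil
| .cons _ q ζ => .app (.app (θ.sel .tcons) (fold θ q)) (foldBr θ ζ)
end

mutual
/-- One-step reduction of λhs: the closure under all term contexts (including
    under bang and inside inspection branches) of β, β□, and nondeterministic
    trail inspection. -/
inductive Red : Tm → Tm → Prop
| beta (τ : Ty) (s t : Tm) : Red (.app (.lam τ s) t) (openS 0 t s)
| betaBox (τ : Ty) (s t : Tm) : Red (.lett τ (.bang s) t) (openA 0 s t)
| tinsp (q : Tr) (θ : Br) : Red (.ti θ) (fold θ q)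
| lam {s t : Tm} (τ : Ty) : Red s t → Red (.lam τ s) (.lam τ t)
| appL {s t : Tm} (r : Tm) : Red s t → Red (.app s r) (.app t r)
| appR {s t : Tm} (r : Tm) : Red s t → Red (.app r s) (.app r t)
| bang {s t : Tm} : Red s t → Red (.bang s) (.bang t)
| lettL {s t : Tm} (τ : Ty) (r : Tm) : Red s t → Red (.lett τ s r) (.lett τ t r)
| lettR {s t : Tm} (τ : Ty) (r : Tm) : Red s t → Red (.lett τ r s) (.lett τ r t)
| ti {θ θ' : Br} : RedBr θ θ' → Red (.ti θ) (.ti θ')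
inductive RedBr : Br → Br → Prop
| here {s t : Tm} (ψ : Lab) (θ : Br) : Red s t → RedBr (.cons ψ s θ) (.cons ψ t θ)
| there {θ θ' : Br} (ψ : Lab) (s : Tm) : RedBr θ θ' → RedBr (.cons ψ s θ) (.cons ψ s θ')
end

/-- Strong normalization: no infinite reduction sequence starting from s. -/
def SN (s : Tm) : Prop :=
  ¬ ∃ f : ℕ → Tm, f 0 = s ∧ ∀ n, Red (f n) (f (n+1))

def SNset : Set Tm := {s | SN s}

/-- Neutral terms: not a λ-abstraction and not a bang. -/
def Neutral : Tm → Prop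
| .lam _ _ => False
| .bang _ => False
| _ => True

/-- Girard's reducibility candidates. -/
def CR (C : Set Tm) : Prop :=
  C ⊆ SNset ∧
  (∀ s t, s ∈ C → Red s t → t ∈ C) ∧
  (∀ s, Neutral s → (∀ t, Red s t → t ∈ C) → s ∈ C)

/-- Pre-candidates: CR1 and CR2 only. -/
def PCR (C : Set Tm) : Prop :=
  C ⊆ SNset ∧ (∀ s t, s ∈ C → Red s t → t ∈ C)

/-- The substitutive sub-candidate C⟨u↦D⟩. -/
def subCand (C : Set Tm) (u : ℕ) (D : Set Tm) : Set Tm :=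
  {s | s ∈ C ∧ ∀ t ∈ D, substA u t s ∈ C}

/-- Reducible sets Red(τ). -/
def RedSet : Ty → Set Tm
| .base _ => SNset
| .arr τ σ => {s | ∀ t ∈ RedSet τ, Tm.app s t ∈ RedSet σ}
| .box τ => {s | ∀ (u : ℕ) (C : Set Tm), CR C →
    ∀ t ∈ subCand C u (RedSet τ), Tm.lett τ s (closeA 0 u t) ∈ C}

/-- Branch typing function T^σ. -/
def TB (σ : Ty) : Lab → Ty
| .lam => .arr σ σ
| .trn => .arr σ (.arr σ σ)
| .app => .arr σ (.arr σ σ)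
| .lett => .arr σ (.arr σ σ)
| .tcons => .arr σ (.arr σ σ)
| _ => σ

abbrev Ctx := List (ℕ × Ty)

mutual
/-- λhs typing judgment Δ;Γ ⊢ s : τ. -/
inductive Tp : Ctx → Ctx → Tm → Ty → Prop
| var {Δ Γ : Ctx} {a : ℕ} {τ : Ty} : (a, τ) ∈ Γ → Tp Δ Γ (.fvar a) τ
| avar {Δ Γ : Ctx} {u : ℕ} {τ : Ty} : (u, τ) ∈ Δ → Tp Δ Γ (.favar u) τ
| lam {Δ Γ : Ctx} {τ σ : Ty} {s : Tm} (L : Finset ℕ) :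
    (∀ a ∉ L, Tp Δ ((a, τ) :: Γ) (openS 0 (.fvar a) s) σ) →
    Tp Δ Γ (.lam τ s) (.arr τ σ)
| app {Δ Γ : Ctx} {τ σ : Ty} {s t : Tm} :
    Tp Δ Γ s (.arr τ σ) → Tp Δ Γ t τ → Tp Δ Γ (.app s t) σ
| bang {Δ Γ : Ctx} {τ : Ty} {s : Tm} :
    Tp Δ [] s τ → Tp Δ Γ (.bang s) (.box τ)
| lett {Δ Γ : Ctx} {τ σ : Ty} {s t : Tm} (L : Finset ℕ) :
    Tp Δ Γ s (.box τ) →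
    (∀ u ∉ L, Tp ((u, τ) :: Δ) Γ (openA 0 (.favar u) t) σ) →
    Tp Δ Γ (.lett τ s t) σ
| ti {Δ Γ : Ctx} {σ : Ty} {θ : Br} :
    Lab.dflt ∈ θ.dom → TpBr Δ θ σ → Tp Δ Γ (.ti θ) σ
/-- Typing of inspection branch maps: each branch θ(ψ) is closed and has type T^σ(ψ). -/
inductive TpBr : Ctx → Br → Ty → Prop
| nil {Δ : Ctx} {σ : Ty} : TpBr Δ .nil σ
| cons {Δ : Ctx} {σ : Ty} {ψ : Lab} {t : Tm} {θ : Br} :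
    Tp Δ [] t (TB σ ψ) → TpBr Δ θ σ → TpBr Δ (.cons ψ t θ) σ
end

mutual
/-- Simultaneous (capture-avoiding) substitution of terms for free simple
    and audited variables; the simple component does not act under bangs. -/
def msub (σS σA : ℕ → Option Tm) : Tm → Tm
| .bvar i => .bvar i
| .fvar a => (σS a).getD (.fvar a)
| .bavar i => .bavar i
| .favar u => (σA u).getD (.favar u)
| .lam τ s => .lam τ (msub σS σA s)
| .app s t => .app (msub σS σA s) (msub σS σA t)
| .bang s => .bang (msub (fun _ => none) σA s)
| .lett τ s t => .lett τ (msub σS σA s) (msub σS σA t)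
| .ti θ => .ti (msubBr σS σA θ)
def msubBr (σS σA : ℕ → Option Tm) : Br → Br
| .nil => .nil
| .cons ψ t θ => .cons ψ (msub σS σA t) (msubBr σS σA θ)
end

/-- A (Δ;Γ)-adapted interpretation: a simultaneous substitution defined exactly
    on dom(Δ) ∪ dom(Γ) sending each declared variable into the corresponding
    reducible set. -/
def Adapted (Δ Γ : Ctx) (σS σA : ℕ → Option Tm) : Prop :=
  (∀ a, (σS a).isSome ↔ ∃ τ, (a, τ) ∈ Γ) ∧
  (∀ u, (σA u).isSome ↔ ∃ τ, (u, τ) ∈ Δ) ∧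
  (∀ a τ t, (a, τ) ∈ Γ → σS a = some t → t ∈ RedSet τ) ∧
  (∀ u τ t, (u, τ) ∈ Δ → σA u = some t → t ∈ RedSet τ)

end LHS

/-!
Girard's argument, by induction on `τ`. The one delicate point is CR3 at `□τ`: for neutral `s`
one needs `closeA 0 u t` to be strongly normalizing, knowing only that the instances `t[r/u]`
with `r ∈ Red τ` are. Closing is not a mere renaming up to reduction, because the dangling
indices it creates get captured once `!`-redexes fire. Instead one substitutes for `u` a *sponge*,
a hereditarily neutral, strongly normalizing trail inspection that can reduce to each of
`bavar 0, …, bavar n`. It lies in every candidate, and `t[sponge/u]` simulates `closeA 0 u t`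
step by step (`Sim`), so strong normalization transfers.
-/

namespace LHS

open Relation

theorem sn_iff_acc {s : Tm} : SN s ↔ Acc (flip Red) s :=
  not_iff_comm.mp not_acc_iff_exists_descending_chain

theorem acc_of_acc_map {F : Tm → Tm} (hF : ∀ {a b}, Red a b → Red (F a) (F b)) {s : Tm}
    (h : Acc (flip Red) (F s)) : Acc (flip Red) s :=
  Subrelation.accessible (fun h => hF h) (InvImage.accessible F h)

theorem cr_snset : CR SNset :=
  ⟨fun _ hs => hs,
   fun _ _ hs hst => sn_iff_acc.2 ((sn_iff_acc.1 hs).inv hst),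
   fun _ _ h => sn_iff_acc.2 (Acc.intro _ fun t ht => sn_iff_acc.1 (h t ht))⟩

namespace CR

variable {C : Set Tm}

theorem acc (hC : CR C) {s : Tm} (hs : s ∈ C) : Acc (flip Red) s :=
  sn_iff_acc.1 (hC.1 hs)

theorem mem_of_reflTransGen (hC : CR C) {s t : Tm} (hs : s ∈ C) (h : ReflTransGen Red s t) :
    t ∈ C := by
  induction h with
  | refl => exact hs
  | tail _ hstep ih => exact hC.2.1 _ _ ih hstep

theorem fvar_mem (hC : CR C) (a : ℕ) : Tm.fvar a ∈ C :=
  hC.2.2 _ trivial fun _ h => nomatch h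

theorem favar_mem (hC : CR C) (u : ℕ) : Tm.favar u ∈ C :=
  hC.2.2 _ trivial fun _ h => nomatch h

end CR

mutual
theorem fold_rel {R : Tm → Tm → Prop} {θ θ' : Br} (hsel : ∀ ψ, R (θ.sel ψ) (θ'.sel ψ))
    (happ : ∀ {a a' b b'}, R a a' → R b b' → R (.app a b) (.app a' b')) :
    ∀ q, R (fold θ q) (fold θ' q)
  | .rfl _ | .bet .. | .betb .. | .ti .. => hsel _
  | .trn q q' | .app q q' | .lett q _ q' =>
    happ (happ (hsel _) (fold_rel hsel happ q)) (fold_rel hsel happ q')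
  | .lam _ q => happ (hsel _) (fold_rel hsel happ q)
  | .trpl ζ => foldBr_rel hsel happ ζ
theorem foldBr_rel {R : Tm → Tm → Prop} {θ θ' : Br}
    (hsel : ∀ ψ, R (θ.sel ψ) (θ'.sel ψ))
    (happ : ∀ {a a' b b'}, R a a' → R b b' → R (.app a b) (.app a' b')) :
    ∀ ζ, R (foldBr θ ζ) (foldBr θ' ζ)
  | .nil => hsel _
  | .cons _ q ζ => happ (happ (hsel _) (fold_rel hsel happ q)) (foldBr_rel hsel happ ζ)
end

theorem fold_induction {P : Tm → Prop} {θ : Br} (hsel : ∀ ψ, P (θ.sel ψ))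
    (happ : ∀ {a b}, P a → P b → P (.app a b)) (q : Tr) : P (fold θ q) :=
  fold_rel (R := fun a _ => P a) (θ' := θ) hsel happ q

def Br.map (f : Tm → Tm) : Br → Br
  | .nil => .nil
  | .cons ψ t θ => .cons ψ (f t) (θ.map f)

theorem Br.lookup_map (f : Tm → Tm) : ∀ (θ : Br) (ψ : Lab),
    (θ.map f).lookup ψ = (θ.lookup ψ).map f
  | .nil, _ => rfl
  | .cons ψ' t θ, ψ => by
    by_cases h : ψ' = ψ <;> simp [Br.map, Br.lookup, h, Br.lookup_map f θ ψ]

theorem Br.isSome_lookup_map (f : Tm → Tm) {θ : Br} {ψ : Lab} (h : (θ.lookup ψ).isSome) :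
    ((θ.map f).lookup ψ).isSome := by
  simpa [Br.lookup_map] using h

theorem Br.sel_eq_getD (θ : Br) (ψ : Lab) :
    θ.sel ψ = (θ.lookup ψ).getD ((θ.lookup .dflt).getD (.bvar 0)) := by
  unfold Br.sel
  cases θ.lookup ψ <;> rfl

theorem Br.sel_map (f : Tm → Tm) {θ : Br} (hd : (θ.lookup .dflt).isSome) (ψ : Lab) :
    (θ.map f).sel ψ = f (θ.sel ψ) := by
  obtain ⟨d, hd⟩ := Option.isSome_iff_exists.1 hd
  unfold Br.sel
  rw [Br.lookup_map, Br.lookup_map, hd]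
  cases θ.lookup ψ <;> rfl

theorem fold_map {f : Tm → Tm} (hf : ∀ a b, f (.app a b) = .app (f a) (f b)) {θ : Br}
    (hd : (θ.lookup .dflt).isSome) (q : Tr) : fold (θ.map f) q = f (fold θ q) :=
  fold_rel (R := fun a b => b = f a) (fun ψ => Br.sel_map f hd ψ)
    (by rintro _ _ _ _ rfl rfl; exact (hf _ _).symm) q

theorem openABr_eq_map (k : ℕ) (r : Tm) : ∀ θ, openABr k r θ = θ.map (openA k r)
  | .nil => rfl
  | .cons _ _ θ => by rw [openABr, Br.map, openABr_eq_map k r θ]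

theorem openSBr_eq_map (k : ℕ) (r : Tm) : ∀ θ, openSBr k r θ = θ.map (openS k r)
  | .nil => rfl
  | .cons _ _ θ => by rw [openSBr, Br.map, openSBr_eq_map k r θ]

def Br.All (P : Tm → Prop) : Br → Prop
  | .nil => True
  | .cons _ t θ => P t ∧ θ.All P

theorem Br.All.lookup {P : Tm → Prop} : ∀ {θ : Br}, θ.All P → ∀ {ψ : Lab} {t : Tm},
    θ.lookup ψ = some t → P t
  | .cons ψ' _ _, h, ψ, _, hl => by
    by_cases hψ : ψ' = ψ
    · simp only [Br.lookup, hψ, if_true, Option.some.injEq] at hl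
      exact hl ▸ h.1
    · simp only [Br.lookup, hψ, if_false] at hl
      exact h.2.lookup hl

theorem Br.All.sel {P : Tm → Prop} {θ : Br} (h : θ.All P) (h0 : P (.bvar 0)) (ψ : Lab) :
    P (θ.sel ψ) := by
  have getD_mem : ∀ {ψ d}, P d → P ((θ.lookup ψ).getD d) := by
    intro ψ d hd
    cases hl : θ.lookup ψ with
    | some t => exact h.lookup hl
    | none => exact hd
  rw [Br.sel_eq_getD]
  exact getD_mem (getD_mem h0)

theorem Br.All.red {P : Tm → Prop} (hP : ∀ {s t}, Red s t → P s → P t) :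
    ∀ {θ θ' : Br}, RedBr θ θ' → θ.All P → θ'.All P
  | _, _, .here _ _ h, hθ => ⟨hP h hθ.1, hθ.2⟩
  | _, _, .there _ _ h, hθ => ⟨hθ.1, Br.All.red hP h hθ.2⟩

mutual
inductive HNeutral : Tm → Prop
  | bvar (i : ℕ) : HNeutral (.bvar i)
  | fvar (a : ℕ) : HNeutral (.fvar a)
  | bavar (i : ℕ) : HNeutral (.bavar i)
  | favar (u : ℕ) : HNeutral (.favar u)
  | app {s t : Tm} : HNeutral s → HNeutral t → HNeutral (.app s t)
  | ti {θ : Br} : HNeutralBr θ → HNeutral (.ti θ)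
inductive HNeutralBr : Br → Prop
  | nil : HNeutralBr .nil
  | cons {t : Tm} {θ : Br} (ψ : Lab) : HNeutral t → HNeutralBr θ → HNeutralBr (.cons ψ t θ)
end

theorem HNeutral.neutral {s : Tm} (h : HNeutral s) : Neutral s := by
  cases h <;> trivial

theorem HNeutralBr.all : ∀ {θ : Br}, HNeutralBr θ → θ.All HNeutral
  | _, .nil => trivial
  | _, .cons _ ht hθ => ⟨ht, hθ.all⟩

theorem HNeutralBr.fold {θ : Br} (h : HNeutralBr θ) (q : Tr) : HNeutral (fold θ q) :=
  fold_induction (h.all.sel (.bvar 0)) .app q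

mutual
theorem HNeutral.red : ∀ {s t : Tm}, Red s t → HNeutral s → HNeutral t
  | _, _, .tinsp q _, .ti h => h.fold q
  | _, _, .appL _ hr, .app h1 h2 => .app (h1.red hr) h2
  | _, _, .appR _ hr, .app h1 h2 => .app h1 (h2.red hr)
  | _, _, .ti hr, .ti h => .ti (h.red hr)
  | _, _, .beta .., .app h _ => nomatch h
theorem HNeutralBr.red : ∀ {θ θ' : Br}, RedBr θ θ' → HNeutralBr θ → HNeutralBr θ'
  | _, _, .here _ _ hr, .cons _ h1 h2 => .cons _ (h1.red hr) h2
  | _, _, .there _ _ hr, .cons _ h1 h2 => .cons _ h1 (h2.red hr)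
end

theorem acc_app_of_hNeutral {s : Tm} (hs : Acc (flip Red) s) (hsn : HNeutral s) {t : Tm}
    (ht : Acc (flip Red) t) : Acc (flip Red) (.app s t) := by
  induction hs generalizing t with
  | intro s _ ihs =>
    induction ht with
    | intro t ht iht =>
      refine Acc.intro _ fun y hy => ?_
      cases hy with
      | beta => nomatch hsn
      | appL _ hr => exact ihs _ hr (hsn.red hr) (Acc.intro t ht)
      | appR _ hr => exact iht _ hr

theorem acc_cons {t : Tm} (ht : Acc (flip Red) t) {θ : Br} (hθ : Acc (flip RedBr) θ) (ψ : Lab) :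
    Acc (flip RedBr) (.cons ψ t θ) := by
  induction ht generalizing θ with
  | intro t _ iht =>
    induction hθ with
    | intro θ hθ ihθ =>
      refine Acc.intro _ fun y hy => ?_
      cases hy with
      | here _ _ hr => exact iht _ hr (Acc.intro θ hθ)
      | there _ _ hr => exact ihθ _ hr

theorem Br.All.accBr : ∀ {θ : Br}, θ.All (Acc (flip Red)) → Acc (flip RedBr) θ
  | .nil, _ => Acc.intro _ fun _ h => nomatch h
  | .cons ψ _ _, ⟨ht, hθ⟩ => acc_cons ht hθ.accBr ψ

theorem acc_bvar (i : ℕ) : Acc (flip Red) (.bvar i) :=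
  Acc.intro _ fun _ h => nomatch h

theorem acc_bavar (i : ℕ) : Acc (flip Red) (.bavar i) :=
  Acc.intro _ fun _ h => nomatch h

theorem acc_ti {θ : Br} (hn : HNeutralBr θ) (ha : θ.All (Acc (flip Red))) :
    Acc (flip Red) (.ti θ) := by
  induction ha.accBr with
  | intro θ _ ih =>
    refine Acc.intro _ fun y hy => ?_
    cases hy with
    | tinsp q =>
      refine (fold_induction (P := fun a => Acc (flip Red) a ∧ HNeutral a)
        (fun ψ => ⟨ha.sel (acc_bvar 0) ψ, hn.all.sel (.bvar 0) ψ⟩) ?_ q).1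
      exact fun ⟨ha, hna⟩ ⟨hb, hnb⟩ => ⟨acc_app_of_hNeutral ha hna hb, .app hna hnb⟩
    | ti hr => exact ih _ hr (hn.red hr) (ha.red (fun h hs => hs.inv h) hr)

theorem CR.mem_of_hNeutral {C : Set Tm} (hC : CR C) {s : Tm} (hs : Acc (flip Red) s)
    (hn : HNeutral s) : s ∈ C := by
  induction hs with
  | intro s _ ih => exact hC.2.2 s hn.neutral fun t ht => ih t ht (hn.red ht)

mutual
inductive Sim : Tm → Tm → Prop
  | bvar (i : ℕ) : Sim (.bvar i) (.bvar i)
  | fvar (a : ℕ) : Sim (.fvar a) (.fvar a)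
  | bavar (i : ℕ) : Sim (.bavar i) (.bavar i)
  | favar (u : ℕ) : Sim (.favar u) (.favar u)
  | lam {s s' : Tm} (τ : Ty) : Sim s s' → Sim (.lam τ s) (.lam τ s')
  | app {a a' b b' : Tm} : Sim a a' → Sim b b' → Sim (.app a b) (.app a' b')
  | bang {s s' : Tm} : Sim s s' → Sim (.bang s) (.bang s')
  | lett {a a' b b' : Tm} (τ : Ty) : Sim a a' → Sim b b' → Sim (.lett τ a b) (.lett τ a' b')
  | ti {θ θ' : Br} : SimBr θ θ' → Sim (.ti θ) (.ti θ')
  | tinsp {K : Tm} {θ : Br} (q : Tr) (hd : (θ.lookup .dflt).isSome) :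
      Sim K (fold θ q) → Sim K (.ti θ)
inductive SimBr : Br → Br → Prop
  | nil : SimBr .nil .nil
  | cons {t t' : Tm} {θ θ' : Br} (ψ : Lab) : Sim t t' → SimBr θ θ' →
      SimBr (.cons ψ t θ) (.cons ψ t' θ')
end

theorem _root_.Option.Rel.getD {α β : Type*} {r : α → β → Prop} {o : Option α}
    {o' : Option β} (h : Option.Rel r o o') {d : α} {d' : β} (hd : r d d') :
    r (o.getD d) (o'.getD d') := by
  cases h <;> assumption

mutual
theorem Sim.refl : ∀ t, Sim t t
  | .bvar i => .bvar i
  | .fvar a => .fvar a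
  | .bavar i => .bavar i
  | .favar u => .favar u
  | .lam τ s => .lam τ (.refl s)
  | .app a b => .app (.refl a) (.refl b)
  | .bang s => .bang (.refl s)
  | .lett τ a b => .lett τ (.refl a) (.refl b)
  | .ti θ => .ti (SimBr.refl θ)
theorem SimBr.refl : ∀ θ, SimBr θ θ
  | .nil => .nil
  | .cons ψ t θ => .cons ψ (.refl t) (SimBr.refl θ)
end

theorem SimBr.lookup : ∀ {θ θ' : Br}, SimBr θ θ' → ∀ ψ,
    Option.Rel Sim (θ.lookup ψ) (θ'.lookup ψ)
  | _, _, .nil, _ => .none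
  | _, _, .cons ψ' ht hθ, ψ => by
    by_cases hψ : ψ' = ψ
    · simpa [Br.lookup, hψ] using Option.Rel.some ht
    · simpa [Br.lookup, hψ] using hθ.lookup ψ

theorem SimBr.sel {θ θ' : Br} (h : SimBr θ θ') (ψ : Lab) : Sim (θ.sel ψ) (θ'.sel ψ) := by
  rw [Br.sel_eq_getD, Br.sel_eq_getD]
  exact (h.lookup ψ).getD ((h.lookup .dflt).getD (.refl _))

theorem SimBr.fold {θ θ' : Br} (h : SimBr θ θ') (q : Tr) : Sim (fold θ q) (fold θ' q) :=
  fold_rel h.sel .app q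

mutual
theorem Sim.openA : ∀ {a b : Tm}, Sim a b → ∀ (j : ℕ) {W W' : Tm}, Sim W W' →
    Sim (openA j W a) (openA j W' b)
  | _, _, .bvar i, _, _, _, _ => .bvar i
  | _, _, .fvar a, _, _, _, _ => .fvar a
  | _, _, .bavar i, j, _, _, hW => by
    simp only [LHS.openA]
    split
    · exact hW
    · exact .bavar i
  | _, _, .favar u, _, _, _, _ => .favar u
  | _, _, .lam τ h, j, _, _, hW => .lam τ (h.openA j hW)
  | _, _, .app h1 h2, j, _, _, hW => .app (h1.openA j hW) (h2.openA j hW)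
  | _, _, .bang h, j, _, _, hW => .bang (h.openA j hW)
  | _, _, .lett τ h1 h2, j, _, _, hW => .lett τ (h1.openA j hW) (h2.openA (j + 1) hW)
  | _, _, .ti h, j, _, _, hW => .ti (h.openA j hW)
  | _, _, .tinsp (θ := θ) q hd h, j, _, W', hW => by
    show Sim _ (.ti (openABr j W' θ))
    rw [openABr_eq_map]
    refine .tinsp q (Br.isSome_lookup_map _ hd) ?_
    rw [fold_map (fun _ _ => rfl) hd]
    exact h.openA j hW
theorem SimBr.openA : ∀ {θ θ' : Br}, SimBr θ θ' → ∀ (j : ℕ) {W W' : Tm}, Sim W W' →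
    SimBr (openABr j W θ) (openABr j W' θ')
  | _, _, .nil, _, _, _, _ => .nil
  | _, _, .cons ψ h1 h2, j, _, _, hW => .cons ψ (h1.openA j hW) (h2.openA j hW)
end

mutual
theorem Sim.openS : ∀ {a b : Tm}, Sim a b → ∀ (j : ℕ) {W W' : Tm}, Sim W W' →
    Sim (openS j W a) (openS j W' b)
  | _, _, .bvar i, j, _, _, hW => by
    simp only [LHS.openS]
    split
    · exact hW
    · exact .bvar i
  | _, _, .fvar a, _, _, _, _ => .fvar a
  | _, _, .bavar i, _, _, _, _ => .bavar i
  | _, _, .favar u, _, _, _, _ => .favar u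
  | _, _, .lam τ h, j, _, _, hW => .lam τ (h.openS (j + 1) hW)
  | _, _, .app h1 h2, j, _, _, hW => .app (h1.openS j hW) (h2.openS j hW)
  | _, _, .bang h, _, _, _, _ => .bang h
  | _, _, .lett τ h1 h2, j, _, _, hW => .lett τ (h1.openS j hW) (h2.openS j hW)
  | _, _, .ti h, j, _, _, hW => .ti (h.openS j hW)
  | _, _, .tinsp (θ := θ) q hd h, j, _, W', hW => by
    show Sim _ (.ti (openSBr j W' θ))
    rw [openSBr_eq_map]
    refine .tinsp q (Br.isSome_lookup_map _ hd) ?_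
    rw [fold_map (fun _ _ => rfl) hd]
    exact h.openS j hW
theorem SimBr.openS : ∀ {θ θ' : Br}, SimBr θ θ' → ∀ (j : ℕ) {W W' : Tm}, Sim W W' →
    SimBr (openSBr j W θ) (openSBr j W' θ')
  | _, _, .nil, _, _, _, _ => .nil
  | _, _, .cons ψ h1 h2, j, _, _, hW => .cons ψ (h1.openS j hW) (h2.openS j hW)
end

def RootSim : Tm → Tm → Prop
  | .lam τ s, M => ∃ s', ReflTransGen Red M (.lam τ s') ∧ Sim s s'
  | .app a b, M => ∃ a' b', ReflTransGen Red M (.app a' b') ∧ Sim a a' ∧ Sim b b'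
  | .bang s, M => ∃ s', ReflTransGen Red M (.bang s') ∧ Sim s s'
  | .lett τ a b, M => ∃ a' b', ReflTransGen Red M (.lett τ a' b') ∧ Sim a a' ∧ Sim b b'
  | .ti θ, M => ∃ θ', ReflTransGen Red M (.ti θ') ∧ SimBr θ θ'
  | _, _ => True

theorem RootSim.head : ∀ {K M M' : Tm}, Red M M' → RootSim K M' → RootSim K M
  | .lam .., _, _, hM, ⟨s', hr, hs⟩ => ⟨s', .head hM hr, hs⟩
  | .app .., _, _, hM, ⟨a', b', hr, ha, hb⟩ => ⟨a', b', .head hM hr, ha, hb⟩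
  | .bang _, _, _, hM, ⟨s', hr, hs⟩ => ⟨s', .head hM hr, hs⟩
  | .lett .., _, _, hM, ⟨a', b', hr, ha, hb⟩ => ⟨a', b', .head hM hr, ha, hb⟩
  | .ti _, _, _, hM, ⟨θ', hr, hθ⟩ => ⟨θ', .head hM hr, hθ⟩
  | .bvar _, _, _, _, _ | .fvar _, _, _, _, _ | .bavar _, _, _, _, _ | .favar _, _, _, _, _ =>
    trivial

theorem Sim.rootSim : ∀ {K M : Tm}, Sim K M → RootSim K M
  | _, _, .lam _ h | _, _, .bang h | _, _, .ti h => ⟨_, .refl, h⟩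
  | _, _, .app h1 h2 | _, _, .lett _ h1 h2 => ⟨_, _, .refl, h1, h2⟩
  | _, _, .tinsp q _ h => h.rootSim.head (.tinsp q _)
  | _, _, .bvar _ | _, _, .fvar _ | _, _, .bavar _ | _, _, .favar _ => trivial

mutual
theorem Red.simulate : ∀ {K K' M : Tm}, Red K K' → Sim K M →
    ∃ M', TransGen Red M M' ∧ Sim K' M'
  | _, _, _, .beta τ _ _, hM => by
    obtain ⟨_, t', hr, hl, ht⟩ := hM.rootSim
    obtain ⟨s', hr', hs⟩ := hl.rootSim
    have hM : ReflTransGen Red _ (.app (.lam τ s') t') :=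
      hr.trans (hr'.lift (Tm.app · t') fun _ _ => Red.appL t')
    exact ⟨openS 0 t' s', .tail' hM (.beta τ s' t'), hs.openS 0 ht⟩
  | _, _, _, .betaBox τ _ _, hM => by
    obtain ⟨_, t', hr, hl, ht⟩ := hM.rootSim
    obtain ⟨s', hr', hs⟩ := hl.rootSim
    have hM : ReflTransGen Red _ (.lett τ (.bang s') t') :=
      hr.trans (hr'.lift (Tm.lett τ · t') fun _ _ => Red.lettL τ t')
    exact ⟨openA 0 s' t', .tail' hM (.betaBox τ s' t'), ht.openA 0 hs⟩
  | _, _, _, .tinsp q _, hM => by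
    obtain ⟨θ', hr, hθ⟩ := hM.rootSim
    exact ⟨fold θ' q, .tail' hr (.tinsp q θ'), hθ.fold q⟩
  | _, _, _, .lam τ hK, hM => by
    obtain ⟨s', hr, hs⟩ := hM.rootSim
    obtain ⟨M', hM', hK'⟩ := hK.simulate hs
    exact ⟨_, .trans_right hr (hM'.lift (Tm.lam τ) fun _ _ => Red.lam τ), .lam τ hK'⟩
  | _, _, _, .appL _ hK, hM => by
    obtain ⟨a', b', hr, ha, hb⟩ := hM.rootSim
    obtain ⟨M', hM', hK'⟩ := hK.simulate ha
    exact ⟨_, .trans_right hr (hM'.lift (Tm.app · b') fun _ _ => Red.appL b'), .app hK' hb⟩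
  | _, _, _, .appR _ hK, hM => by
    obtain ⟨a', b', hr, ha, hb⟩ := hM.rootSim
    obtain ⟨M', hM', hK'⟩ := hK.simulate hb
    exact ⟨_, .trans_right hr (hM'.lift (Tm.app a') fun _ _ => Red.appR a'), .app ha hK'⟩
  | _, _, _, .bang hK, hM => by
    obtain ⟨s', hr, hs⟩ := hM.rootSim
    obtain ⟨M', hM', hK'⟩ := hK.simulate hs
    exact ⟨_, .trans_right hr (hM'.lift Tm.bang fun _ _ => Red.bang), .bang hK'⟩
  | _, _, _, .lettL τ _ hK, hM => by
    obtain ⟨a', b', hr, ha, hb⟩ := hM.rootSim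
    obtain ⟨M', hM', hK'⟩ := hK.simulate ha
    exact ⟨_, .trans_right hr (hM'.lift (Tm.lett τ · b') fun _ _ => Red.lettL τ b'),
      .lett τ hK' hb⟩
  | _, _, _, .lettR τ _ hK, hM => by
    obtain ⟨a', b', hr, ha, hb⟩ := hM.rootSim
    obtain ⟨M', hM', hK'⟩ := hK.simulate hb
    exact ⟨_, .trans_right hr (hM'.lift (Tm.lett τ a') fun _ _ => Red.lettR τ a'),
      .lett τ ha hK'⟩
  | _, _, _, .ti hK, hM => by
    obtain ⟨θ', hr, hθ⟩ := hM.rootSim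
    obtain ⟨θM', hθM', hK'⟩ := hK.simulate hθ
    exact ⟨_, .trans_right hr (hθM'.lift Tm.ti fun _ _ => Red.ti), .ti hK'⟩
theorem RedBr.simulate : ∀ {θ θ' θM : Br}, RedBr θ θ' → SimBr θ θM →
    ∃ θM', TransGen RedBr θM θM' ∧ SimBr θ' θM'
  | _, _, _, .here ψ _ hK, .cons _ ht hθ => by
    obtain ⟨M', hM', hK'⟩ := hK.simulate ht
    exact ⟨_, hM'.lift (Br.cons ψ · _) fun _ _ h => .here ψ _ h, .cons ψ hK' hθ⟩
  | _, _, _, .there ψ _ hK, .cons _ ht hθ => by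
    obtain ⟨θM', hθM', hK'⟩ := hK.simulate hθ
    exact ⟨_, hθM'.lift (Br.cons ψ _ ·) fun _ _ h => .there ψ _ h, .cons ψ ht hK'⟩
end

theorem Sim.acc {K M : Tm} (h : Sim K M) (hM : Acc (flip Red) M) : Acc (flip Red) K := by
  have hM' : Acc (flip (TransGen Red)) M :=
    Subrelation.accessible (fun h => transGen_swap.mpr h) hM.transGen
  clear hM
  induction hM' generalizing K with
  | intro M _ ih =>
    refine Acc.intro _ fun K' hK' => ?_
    obtain ⟨M', hMM', h'⟩ := hK'.simulate h
    exact ih M' hMM' h'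

def sponge : ℕ → ℕ → Tm
  | 0, k => .bavar k
  | f + 1, k => .ti (.cons .bet (sponge f (k + 1)) (.cons .dflt (.bavar k) .nil))

theorem hNeutral_sponge : ∀ f k, HNeutral (sponge f k)
  | 0, k => .bavar k
  | f + 1, k => .ti (.cons _ (hNeutral_sponge f (k + 1)) (.cons _ (.bavar k) .nil))

theorem acc_sponge : ∀ f k, Acc (flip Red) (sponge f k)
  | 0, k => acc_bavar k
  | f + 1, k => acc_ti (.cons _ (hNeutral_sponge f (k + 1)) (.cons _ (.bavar k) .nil))
      ⟨acc_sponge f (k + 1), acc_bavar k, trivial⟩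

theorem Sim.bavar_sponge : ∀ {f k j : ℕ}, k ≤ j → j ≤ k + f →
    Sim (.bavar j) (sponge f k)
  | 0, k, j, h1, h2 => by
    obtain rfl : j = k := by omega
    exact .bavar j
  | f + 1, k, j, h1, h2 => by
    rcases h1.eq_or_lt with rfl | hlt
    · exact .tinsp (.rfl (.bvar 0)) rfl (.bavar k)
    · exact .tinsp (.bet (.base 0) (.bvar 0) (.bvar 0)) rfl (Sim.bavar_sponge hlt (by omega))

-- `sizeOf t` bounds the `let`-depth of `t`, so the sponge covers every index that closing creates.
mutual
theorem Sim.closeA_substA_sponge (u : ℕ) : ∀ (t : Tm) (k f : ℕ), k + sizeOf t ≤ f →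
    Sim (closeA k u t) (substA u (sponge f 0) t)
  | .bvar i, _, _, _ => .bvar i
  | .fvar a, _, _, _ => .fvar a
  | .bavar i, _, _, _ => .bavar i
  | .favar v, k, f, h => by
    simp only [closeA, substA]
    split
    · exact Sim.bavar_sponge (Nat.zero_le k) (by omega)
    · exact .favar v
  | .lam τ s, k, f, h => .lam τ (Sim.closeA_substA_sponge u s k f (by simp at h; omega))
  | .app a b, k, f, h =>
    .app (Sim.closeA_substA_sponge u a k f (by simp at h; omega))
      (Sim.closeA_substA_sponge u b k f (by simp at h; omega))
  | .bang s, k, f, h => .bang (Sim.closeA_substA_sponge u s k f (by simp at h; omega))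
  | .lett τ a b, k, f, h =>
    .lett τ (Sim.closeA_substA_sponge u a k f (by simp at h; omega))
      (Sim.closeA_substA_sponge u b (k + 1) f (by simp at h; omega))
  | .ti θ, k, f, h => .ti (SimBr.closeA_substA_sponge u θ k f (by simp at h; omega))
theorem SimBr.closeA_substA_sponge (u : ℕ) : ∀ (θ : Br) (k f : ℕ), k + sizeOf θ ≤ f →
    SimBr (closeABr k u θ) (substABr u (sponge f 0) θ)
  | .nil, _, _, _ => .nil
  | .cons ψ t θ, k, f, h =>
    .cons ψ (Sim.closeA_substA_sponge u t k f (by simp at h; omega))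
      (SimBr.closeA_substA_sponge u θ k f (by simp at h; omega))
end

theorem acc_closeA_of_mem_subCand {C D : Set Tm} (hC : CR C) (hD : CR D) {u : ℕ} {t : Tm}
    (ht : t ∈ subCand C u D) : Acc (flip Red) (closeA 0 u t) :=
  (Sim.closeA_substA_sponge u t 0 (sizeOf t) (by omega)).acc
    (hC.acc (ht.2 _ (hD.mem_of_hNeutral (acc_sponge _ 0) (hNeutral_sponge _ 0))))

theorem cr_arrow {A B : Set Tm} (hA : CR A) (hB : CR B) :
    CR {s | ∀ t ∈ A, Tm.app s t ∈ B} := by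
  refine ⟨fun s hs => ?_, fun s s' hs hss' t ht => hB.2.1 _ _ (hs t ht) (.appL t hss'),
    fun s hs hred t ht => ?_⟩
  · exact sn_iff_acc.2 (acc_of_acc_map (Red.appL _) (hB.acc (hs _ (hA.fvar_mem 0))))
  · induction hA.acc ht with
    | intro t _ ih =>
      refine hB.2.2 _ trivial fun y hy => ?_
      cases hy with
      | beta => exact hs.elim
      | appL _ h => exact hred _ h t ht
      | appR _ h => exact ih _ h (hA.2.1 _ _ ht h)

theorem cr_box {D : Set Tm} (hD : CR D) (τ : Ty) :
    CR {s | ∀ (u : ℕ) (C : Set Tm), CR C →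
      ∀ t ∈ subCand C u D, Tm.lett τ s (closeA 0 u t) ∈ C} := by
  refine ⟨fun s hs => ?_,
    fun s s' hs hss' u C hC t ht => hC.2.1 _ _ (hs u C hC t ht) (.lettL τ _ hss'),
    fun s hs hred u C hC t ht => ?_⟩
  · have hvar : Tm.favar 0 ∈ subCand SNset 0 D :=
      ⟨cr_snset.favar_mem 0, fun r hr => by simpa [substA] using hD.1 hr⟩
    exact sn_iff_acc.2 (acc_of_acc_map (Red.lettL τ _) (cr_snset.acc (hs 0 _ cr_snset _ hvar)))
  · -- The reducts `s'` of `s` lie in the set, so `let(s', K)` is in `C` by CR2 from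
    -- `let(s', closeA 0 u t)`; only `K` needs an induction.
    suffices ∀ K, Acc (flip Red) K → ReflTransGen Red (closeA 0 u t) K →
        Tm.lett τ s K ∈ C from
      this _ (acc_closeA_of_mem_subCand hC hD ht) .refl
    intro K hK
    induction hK with
    | intro K _ ih =>
      intro hreach
      refine hC.2.2 _ trivial fun y hy => ?_
      cases hy with
      | betaBox => exact hs.elim
      | lettL _ _ h =>
        exact hC.mem_of_reflTransGen (hred _ h u C hC t ht)
          (hreach.lift (Tm.lett τ _) fun _ _ => Red.lettR τ _)
      | lettR _ _ h => exact ih _ h (hreach.tail h)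

end LHS

open LHS in
/-- For every λhs type τ, the reducible set Red(τ) is a reducibility candidate. -/
theorem RedSet_CR (τ : Ty) : CR (RedSet τ) := by
  induction τ with
  | base => exact cr_snset
  | arr τ σ hτ hσ => exact cr_arrow hτ hσ
  | box τ hτ => exact cr_box hτ τ
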